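/- Let S be the Cox ring of P^{n_1} × ... × P^{n_s}. Let M be a strongly multistable set of monomials of degree (a_1,...,a_s), and let 1 ≤ i ≤ s; if i ≥ 2 assume additionally that M is x_1,...,x_{i−1}-lex. Then M^{x_i lex} is strongly multistable. -/

import Mathlib

/-!
Write the move `x^w ↦ x_{i₀,j'} · x^w / x_{i₀,j}` (`j' < j`) as an exchange. If `i₀ = i`, it
keeps the fibre of `w` and raises its block-`i` part in the lex order, and initial lexsegments
are closed upwards. If `i₀ ≠ i`, it keeps the block-`i` part and exchanges the off-block part;
strong multistability of `M` maps the old fibre of `M` into the new one, so the new fibre is at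
least as large and its initial lexsegment contains the old one.
-/

open MvPolynomial

namespace Gotzmann

/-- Variable index set for the Cox ring of `P^{n 0} × ... × P^{n (s-1)}`:
the variable `x_{i,j}` is `⟨i, j⟩`. -/
abbrev PPVar (s : ℕ) (n : Fin s → ℕ) : Type := Σ i : Fin s, Fin (n i + 1)

/-- The multidegree of the variable `x_{i,j}` is the standard basis vector `e_i ∈ ℤ^s` (here
realised in `ℕ^s`). -/
def ppw (s : ℕ) (n : Fin s → ℕ) : PPVar s n → (Fin s → ℕ) :=
  fun v => Pi.single v.1 1

/-- Weighted degree of an exponent vector. -/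
def wdeg {σ M : Type*} [AddCommMonoid M] (w : σ → M) (u : σ →₀ ℕ) : M :=
  u.sum fun v e => e • w v

/-- Multigraded Hilbert function of `S/I` in degree `b`: the dimension of the image of the
degree-`b` part of `S` in `S/I`. -/
noncomputable def hilb (k : Type*) [Field k] {σ M : Type*} [AddCommMonoid M]
    (w : σ → M) (I : Ideal (MvPolynomial σ k)) (b : M) : ℕ :=
  Module.finrank k ((weightedHomogeneousSubmodule k w b).map
    (Ideal.Quotient.mkₐ k I).toLinearMap)

/-- An ideal homogeneous with respect to the grading by `w`. -/
def IsHomog {k : Type*} [Field k] {σ M : Type*} [AddCommMonoid M]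
    (w : σ → M) (I : Ideal (MvPolynomial σ k)) : Prop :=
  ∃ G : Set (MvPolynomial σ k),
    (∀ f ∈ G, ∃ d : M, f.IsWeightedHomogeneous w d) ∧ I = Ideal.span G

/-- A monomial ideal. -/
def IsMonomialIdeal {k : Type*} [Field k] {σ : Type*} (I : Ideal (MvPolynomial σ k)) : Prop :=
  ∃ A : Set (σ →₀ ℕ), I = Ideal.span ((fun u => (monomial u (1 : k))) '' A)

/-- Generated in degrees componentwise at most `a`. -/
def GenInDegLE {k : Type*} [Field k] {σ : Type*} {s : ℕ}
    (w : σ → (Fin s → ℕ)) (I : Ideal (MvPolynomial σ k)) (a : Fin s → ℕ) : Prop :=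
  ∃ G : Set (MvPolynomial σ k), I = Ideal.span G ∧
    ∀ f ∈ G, ∃ d : Fin s → ℕ, f.IsWeightedHomogeneous w d ∧ ∀ i, d i ≤ a i

/-- Generated in degrees at most `a` for the standard grading. -/
def GenInDegLE1 {k : Type*} [Field k] {σ : Type*}
    (I : Ideal (MvPolynomial σ k)) (a : ℕ) : Prop :=
  ∃ G : Set (MvPolynomial σ k), I = Ideal.span G ∧
    ∀ f ∈ G, ∃ d : ℕ, f.IsWeightedHomogeneous (fun _ : σ => (1 : ℕ)) d ∧ d ≤ a

/-- `P` is the (multigraded) Hilbert polynomial of `I`: it agrees with the Hilbert function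
for all multidegrees sufficiently deep in `ℕ^s`. -/
def IsHilbPoly (k : Type*) [Field k] {σ : Type*} {s : ℕ}
    (w : σ → (Fin s → ℕ)) (I : Ideal (MvPolynomial σ k))
    (P : MvPolynomial (Fin s) ℚ) : Prop :=
  ∃ N : ℕ, ∀ b : Fin s → ℕ, (∀ i, N ≤ b i) →
    eval (fun i => (b i : ℚ)) P = (hilb k w I b : ℚ)

/-- `P` is the Hilbert polynomial of the standard-graded ideal `I`. -/
def IsHilbPoly1 (k : Type*) [Field k] {σ : Type*}
    (I : Ideal (MvPolynomial σ k)) (P : Polynomial ℚ) : Prop :=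
  ∃ N : ℕ, ∀ b : ℕ, N ≤ b →
    P.eval (b : ℚ) = (hilb k (fun _ : σ => (1 : ℕ)) I b : ℚ)

/-- Hilbert polynomial for a `ℤ^s`-graded ring, agreement deep in `ℕ^s ⊆ ℤ^s`. -/
def IsHilbPolyZ (k : Type*) [Field k] {σ : Type*} {s : ℕ}
    (w : σ → (Fin s → ℤ)) (I : Ideal (MvPolynomial σ k))
    (P : MvPolynomial (Fin s) ℚ) : Prop :=
  ∃ N : ℕ, ∀ b : Fin s → ℕ, (∀ i, N ≤ b i) →
    eval (fun i => (b i : ℚ)) P = (hilb k w I (fun i => (b i : ℤ)) : ℚ)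

/-- A strongly multistable (monomial) ideal. -/
def StronglyMultistable {k : Type*} [Field k] {s : ℕ} {n : Fin s → ℕ}
    (I : Ideal (MvPolynomial (PPVar s n) k)) : Prop :=
  IsMonomialIdeal I ∧
    ∀ u : PPVar s n →₀ ℕ, (monomial u (1 : k)) ∈ I →
      ∀ (i : Fin s) (j j' : Fin (n i + 1)), j' < j → u ⟨i, j⟩ ≠ 0 →
        (monomial (u - Finsupp.single ⟨i, j⟩ 1 + Finsupp.single ⟨i, j'⟩ 1) (1 : k)) ∈ I

/-- A strongly multistable set of exponent vectors. -/
def StronglyMultistableSet {s : ℕ} {n : Fin s → ℕ} (M : Set (PPVar s n →₀ ℕ)) : Prop :=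
  ∀ u ∈ M, ∀ (i : Fin s) (j j' : Fin (n i + 1)), j' < j → u ⟨i, j⟩ ≠ 0 →
    u - Finsupp.single ⟨i, j⟩ 1 + Finsupp.single ⟨i, j'⟩ 1 ∈ M

/-- The part of an exponent vector supported on block `i`. -/
noncomputable def blockPart {s : ℕ} {n : Fin s → ℕ} (i : Fin s) (u : PPVar s n →₀ ℕ) :
    PPVar s n →₀ ℕ := u.filter fun v => v.1 = i

/-- The part of an exponent vector supported off block `i`. -/
noncomputable def offBlock {s : ℕ} {n : Fin s → ℕ} (i : Fin s) (u : PPVar s n →₀ ℕ) :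
    PPVar s n →₀ ℕ := u.filter fun v => v.1 ≠ i

/-- Exponent vectors supported on block `i` of total degree `d`
(monomials of degree `d·e_i`). -/
def blockMon {s : ℕ} {n : Fin s → ℕ} (i : Fin s) (d : ℕ) : Set (PPVar s n →₀ ℕ) :=
  {p | (∀ v ∈ p.support, v.1 = i) ∧ p.sum (fun _ e => e) = d}

/-- `blockLt i u v` : the block-`i` monomial of `v` is strictly larger than that of `u` in the
lexicographic order with `x_{i,0} ≻ x_{i,1} ≻ ⋯`. -/
def blockLt {s : ℕ} {n : Fin s → ℕ} (i : Fin s) (u v : PPVar s n →₀ ℕ) : Prop :=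
  Pi.Lex (· < ·) (fun {_} => (· < ·)) (fun j => u ⟨i, j⟩) (fun j => v ⟨i, j⟩)

/-- `M` is an `x_i`-lex set: replacing the block-`i` part of a member by any lexicographically
larger monomial of the same degree stays in `M`. -/
def IsXiLex {s : ℕ} {n : Fin s → ℕ} (i : Fin s) (M : Set (PPVar s n →₀ ℕ)) : Prop :=
  ∀ u ∈ M, ∀ p' : PPVar s n →₀ ℕ,
    (∀ v ∈ p'.support, v.1 = i) →
    p'.sum (fun _ e => e) = (blockPart i u).sum (fun _ e => e) →
    blockLt i (blockPart i u) p' →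
    offBlock i u + p' ∈ M

/-- The initial lexsegment of size `c` among block-`i` monomials of degree `d`. -/
noncomputable def lexSeg {s : ℕ} {n : Fin s → ℕ} (i : Fin s) (d c : ℕ) :
    Set (PPVar s n →₀ ℕ) :=
  {p ∈ blockMon i d | (blockMon (n := n) i d ∩ {p' | blockLt i p p'}).ncard < c}

/-- The operation `M ↦ M^{x_i lex}`: in each fibre over a fixed off-block-`i` part, replace the
set of block-`i` parts by the initial lexsegment of the same cardinality. -/
noncomputable def xiLexify {s : ℕ} {n : Fin s → ℕ} (i : Fin s)
    (M : Set (PPVar s n →₀ ℕ)) : Set (PPVar s n →₀ ℕ) :=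
  {w | ∃ u ∈ M, offBlock i w = offBlock i u ∧
        blockPart i w ∈ lexSeg i ((blockPart i u).sum fun _ e => e)
          ({p | p ∈ blockMon i ((blockPart i u).sum fun _ e => e) ∧
              offBlock i u + p ∈ M}).ncard}

/-- Successively apply `M ↦ M^{x_i lex}` for the first `t` blocks. -/
noncomputable def lexifyUpTo {s : ℕ} {n : Fin s → ℕ} (M : Set (PPVar s n →₀ ℕ)) :
    ℕ → Set (PPVar s n →₀ ℕ)
  | 0 => M
  | t + 1 => if h : t < s then xiLexify ⟨t, h⟩ (lexifyUpTo M t) else lexifyUpTo M t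

/-- `M^{multilex} = M^{x_1 lex ⋯ x_s lex}`. -/
noncomputable def multilexify {s : ℕ} {n : Fin s → ℕ} (M : Set (PPVar s n →₀ ℕ)) :
    Set (PPVar s n →₀ ℕ) := lexifyUpTo M s

/-- The exponent vectors of the monomials of `I` of multidegree `a`. -/
def monomialsOf {k : Type*} [Field k] {s : ℕ} {n : Fin s → ℕ}
    (I : Ideal (MvPolynomial (PPVar s n) k)) (a : Fin s → ℕ) : Set (PPVar s n →₀ ℕ) :=
  {u | wdeg (ppw s n) u = a ∧ (monomial u (1 : k)) ∈ I}

/-- A multilex (monomial) ideal. -/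
def IsMultilexIdeal {k : Type*} [Field k] {s : ℕ} {n : Fin s → ℕ}
    (I : Ideal (MvPolynomial (PPVar s n) k)) : Prop :=
  IsMonomialIdeal I ∧ ∀ (a : Fin s → ℕ) (i : Fin s), IsXiLex i (monomialsOf I a)

/-- `κ` encodes the `d`-th Macaulay representation of `α`:
`α = C(κ(d),d) + ⋯ + C(κ(1),1)` with `κ(d) > ⋯ > κ(1) ≥ 0`; here `κ j` is the paper's
`κ(j+1)`. -/
def IsMacaulayRep (d α : ℕ) (κ : Fin d → ℕ) : Prop :=
  StrictMono κ ∧ α = ∑ j : Fin d, Nat.choose (κ j) ((j : ℕ) + 1)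

/-- The Macaulay bound `α^{⟨d⟩}`. -/
noncomputable def macaulayBound (d α : ℕ) : ℕ :=
  letI := Classical.propDecidable (∃ κ : Fin d → ℕ, IsMacaulayRep d α κ)
  if h : ∃ κ : Fin d → ℕ, IsMacaulayRep d α κ
  then ∑ j : Fin d, Nat.choose (h.choose j + 1) ((j : ℕ) + 2)
  else 0

/-- Maximal growth of a Hilbert function in one direction: with
`H u = C(nv+u, nv)·q(u) + r(u)` the Euclidean division, `H (u+1) = C(nv+u+1,nv)·q(u) + r(u)^⟨u⟩`. -/
def growthStep (nv : ℕ) (H : ℕ → ℕ) (u : ℕ) : Prop :=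
  H (u + 1) =
    (nv + u + 1).choose nv * (H u / (nv + u).choose nv)
      + macaulayBound u (H u % (nv + u).choose nv)

/-- Hilbert polynomial for a `ℤ^s`-graded Cox ring, with agreement sufficiently far into the nef
cone, parameterised by nef classes `c i`. -/
def IsHilbPolyNef (k : Type*) [Field k] {σ : Type*} {s : ℕ}
    (w : σ → (Fin s → ℤ)) (c : Fin s → (Fin s → ℤ))
    (I : Ideal (MvPolynomial σ k)) (P : MvPolynomial (Fin s) ℚ) : Prop :=
  ∃ N : ℕ, ∀ b : Fin s → ℕ, (∀ i, N ≤ b i) →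
    eval (fun j => ((∑ i, (b i : ℤ) * c i j : ℤ) : ℚ)) P
      = (hilb k w I (fun j => ∑ i, (b i : ℤ) * c i j) : ℚ)

/-- The `ℤ²`-grading of the Cox ring of Kleinschmidt's Picard-rank-2 toric variety `X_d(a)`:
`deg z_i = (-a_i, 1)` for `1 ≤ i ≤ s`, `deg z_{s+1} = (0,1)`, `deg z_i = (1,0)` otherwise
(indices here are `0`-based). -/
def kw (d s : ℕ) (a : Fin s → ℕ) : Fin (d + 2) → (Fin 2 → ℤ) :=
  fun i => if h : (i : ℕ) < s then ![-(a ⟨i, h⟩ : ℤ), 1]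
    else if (i : ℕ) = s then ![0, 1] else ![1, 0]

section Exchange

variable {σ : Type*}

/-- The exponent vector of `x_y · x^u / x_x`; subtraction truncates, so this is a monomial
move only when `u x ≠ 0`. -/
noncomputable def exchange (u : σ →₀ ℕ) (x y : σ) : σ →₀ ℕ :=
  u - Finsupp.single x 1 + Finsupp.single y 1

theorem degree_exchange {u : σ →₀ ℕ} {x : σ} (y : σ) (hu : u x ≠ 0) :
    (exchange u x y).degree = u.degree := by
  have hle : Finsupp.single x 1 ≤ u := Finsupp.single_le_iff.2 (Nat.one_le_iff_ne_zero.2 hu)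
  conv_rhs => rw [← tsub_add_cancel_of_le hle]
  simp only [exchange, map_add, Finsupp.degree_single]

theorem exchange_add {u : σ →₀ ℕ} {x : σ} (y : σ) (v : σ →₀ ℕ) (hu : u x ≠ 0) :
    exchange (u + v) x y = exchange u x y + v := by
  classical
  ext z
  simp only [exchange, Finsupp.add_apply, Finsupp.tsub_apply, Finsupp.single_apply]
  split_ifs <;> grind

theorem filter_exchange_of_pos (P : σ → Prop) [DecidablePred P] (u : σ →₀ ℕ) {x y : σ}
    (hx : P x) (hy : P y) : (exchange u x y).filter P = exchange (u.filter P) x y := by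
  classical
  ext z
  simp only [exchange, Finsupp.filter_apply, Finsupp.add_apply, Finsupp.tsub_apply,
    Finsupp.single_apply]
  split_ifs <;> grind

theorem filter_exchange_of_neg (P : σ → Prop) [DecidablePred P] (u : σ →₀ ℕ) {x y : σ}
    (hx : ¬P x) (hy : ¬P y) : (exchange u x y).filter P = u.filter P := by
  classical
  ext z
  simp only [exchange, Finsupp.filter_apply, Finsupp.add_apply, Finsupp.tsub_apply,
    Finsupp.single_apply]
  split_ifs <;> grind

end Exchange

section Blocks

variable {s : ℕ} {n : Fin s → ℕ}

theorem blockPart_apply_self (i : Fin s) (u : PPVar s n →₀ ℕ) (j : Fin (n i + 1)) :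
    blockPart i u ⟨i, j⟩ = u ⟨i, j⟩ :=
  Finsupp.filter_apply_pos _ _ rfl

theorem offBlock_apply_of_ne {i i₀ : Fin s} (h : i₀ ≠ i) (u : PPVar s n →₀ ℕ)
    (j : Fin (n i₀ + 1)) : offBlock i u ⟨i₀, j⟩ = u ⟨i₀, j⟩ :=
  Finsupp.filter_apply_pos _ _ h

theorem blockPart_exchange_self (i : Fin s) (u : PPVar s n →₀ ℕ) (j j' : Fin (n i + 1)) :
    blockPart i (exchange u ⟨i, j⟩ ⟨i, j'⟩) = exchange (blockPart i u) ⟨i, j⟩ ⟨i, j'⟩ :=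
  filter_exchange_of_pos _ u rfl rfl

theorem offBlock_exchange_self (i : Fin s) (u : PPVar s n →₀ ℕ) (j j' : Fin (n i + 1)) :
    offBlock i (exchange u ⟨i, j⟩ ⟨i, j'⟩) = offBlock i u :=
  filter_exchange_of_neg _ u (not_not_intro rfl) (not_not_intro rfl)

theorem blockPart_exchange_of_ne {i i₀ : Fin s} (h : i₀ ≠ i) (u : PPVar s n →₀ ℕ)
    (j j' : Fin (n i₀ + 1)) : blockPart i (exchange u ⟨i₀, j⟩ ⟨i₀, j'⟩) = blockPart i u :=
  filter_exchange_of_neg _ u h h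

theorem offBlock_exchange_of_ne {i i₀ : Fin s} (h : i₀ ≠ i) (u : PPVar s n →₀ ℕ)
    (j j' : Fin (n i₀ + 1)) :
    offBlock i (exchange u ⟨i₀, j⟩ ⟨i₀, j'⟩) = exchange (offBlock i u) ⟨i₀, j⟩ ⟨i₀, j'⟩ :=
  filter_exchange_of_pos _ u h h

theorem blockMon_finite (i : Fin s) (d : ℕ) : (blockMon (n := n) i d).Finite :=
  (Finsupp.finite_of_degree_eq d).subset fun _ hp => hp.2

theorem exchange_mem_blockMon {i : Fin s} {d : ℕ} {p : PPVar s n →₀ ℕ} (hp : p ∈ blockMon i d)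
    {j : Fin (n i + 1)} (j' : Fin (n i + 1)) (hj : p ⟨i, j⟩ ≠ 0) :
    exchange p ⟨i, j⟩ ⟨i, j'⟩ ∈ blockMon i d := by
  refine ⟨fun v hv => ?_, (degree_exchange _ hj).trans hp.2⟩
  rcases Finset.mem_union.1 (Finsupp.support_add hv) with hv | hv
  · exact hp.1 v (Finsupp.support_tsub hv)
  · rw [Finset.mem_singleton.1 (Finsupp.support_single_subset hv)]

theorem blockLt_exchange {i : Fin s} {j j' : Fin (n i + 1)} (hj : j' < j)
    (p : PPVar s n →₀ ℕ) : blockLt i p (exchange p ⟨i, j⟩ ⟨i, j'⟩) := by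
  refine ⟨j', fun l hl => ?_, ?_⟩
  · simp [exchange, hl.ne', (hl.trans hj).ne']
  · simp [exchange, hj.ne']

theorem blockLt_trans {i : Fin s} {p q r : PPVar s n →₀ ℕ}
    (hpq : blockLt i p q) (hqr : blockLt i q r) : blockLt i p r :=
  lt_trans (α := Lex (Fin (n i + 1) → ℕ)) hpq hqr

theorem lexSeg_of_blockLt {i : Fin s} {d c : ℕ} {p q : PPVar s n →₀ ℕ}
    (hp : p ∈ lexSeg (n := n) i d c) (hq : q ∈ blockMon i d) (hpq : blockLt i p q) :
    q ∈ lexSeg (n := n) i d c := by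
  refine ⟨hq, lt_of_le_of_lt (Set.ncard_le_ncard ?_ ?_) hp.2⟩
  · exact fun r hr => ⟨hr.1, blockLt_trans hpq hr.2⟩
  · exact (blockMon_finite i d).subset Set.inter_subset_left

theorem lexSeg_mono {i : Fin s} {d : ℕ} : Monotone (lexSeg (n := n) i d) :=
  fun _ _ hc _ hp => ⟨hp.1, hp.2.trans_le hc⟩

theorem ncard_fibre_le_exchange {M : Set (PPVar s n →₀ ℕ)} (hM : StronglyMultistableSet M)
    (i : Fin s) (d : ℕ) {i₀ : Fin s} {j j' : Fin (n i₀ + 1)} (hj : j' < j)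
    {v : PPVar s n →₀ ℕ} (hv : v ⟨i₀, j⟩ ≠ 0) :
    {p | p ∈ blockMon i d ∧ v + p ∈ M}.ncard
      ≤ {p | p ∈ blockMon i d ∧ exchange v ⟨i₀, j⟩ ⟨i₀, j'⟩ + p ∈ M}.ncard := by
  refine Set.ncard_le_ncard (fun p ⟨hp, hvp⟩ => ⟨hp, ?_⟩)
    ((blockMon_finite i d).subset fun _ hp => hp.1)
  rw [← exchange_add _ _ hv]
  exact hM _ hvp i₀ j j' hj (Nat.add_pos_left (Nat.pos_of_ne_zero hv) _).ne'

end Blocks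

theorem xiLexify_stronglyMultistable_general {s : ℕ} {n : Fin s → ℕ}
    (M : Set (PPVar s n →₀ ℕ))
    (hstab : StronglyMultistableSet M)
    (i : Fin s) :
    StronglyMultistableSet (xiLexify i M) := by
  intro w hwM i₀ j j' hj hw
  show exchange w ⟨i₀, j⟩ ⟨i₀, j'⟩ ∈ xiLexify i M
  obtain ⟨u, hu, hoff, hseg⟩ := hwM
  obtain rfl | hi := eq_or_ne i₀ i
  · have hp : blockPart i₀ w ⟨i₀, j⟩ ≠ 0 := by rwa [blockPart_apply_self]
    refine ⟨u, hu, (offBlock_exchange_self i₀ w j j').trans hoff, ?_⟩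
    rw [blockPart_exchange_self]
    exact lexSeg_of_blockLt hseg (exchange_mem_blockMon hseg.1 j' hp) (blockLt_exchange hj _)
  · have hv : offBlock i u ⟨i₀, j⟩ ≠ 0 := by rwa [← hoff, offBlock_apply_of_ne hi]
    refine ⟨exchange u ⟨i₀, j⟩ ⟨i₀, j'⟩,
      hstab u hu i₀ j j' hj (by rwa [← offBlock_apply_of_ne hi]), ?_, ?_⟩
    · rw [offBlock_exchange_of_ne hi, offBlock_exchange_of_ne hi, hoff]
    · rw [blockPart_exchange_of_ne hi, blockPart_exchange_of_ne hi,
        offBlock_exchange_of_ne hi]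
      exact lexSeg_mono (ncard_fibre_le_exchange hstab i _ hj hv) hseg

/-- **Lemma: `M^{x_i lex}` is strongly multistable.** If `M` is a strongly multistable set of
monomials of multidegree `a`, and (when `i ≥ 1`, `0`-based) `M` is additionally
`x_1,…,x_{i−1}`-lex — i.e. `x_{i'}`-lex for all `i' < i`, a vacuous condition when `i = 0` —
then `M^{x_i lex}` is strongly multistable. -/
theorem xiLexify_stronglyMultistable {s : ℕ} {n : Fin s → ℕ} (a : Fin s → ℕ)
    (M : Set (PPVar s n →₀ ℕ))
    (hdeg : ∀ u ∈ M, wdeg (ppw s n) u = a)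
    (hstab : StronglyMultistableSet M)
    (i : Fin s)
    (hlex : ∀ i' : Fin s, i' < i → IsXiLex i' M) :
    StronglyMultistableSet (xiLexify i M) :=
  xiLexify_stronglyMultistable_general M hstab i

end Gotzmann
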